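/- arXiv:2507.05470 — 2 statements merged into one kernel-verified Lean document; each statement's English description precedes it below -/
import Mathlib

section
/- Under exchangeability of (X₁,Y₁),...,(X_{n+1},Y_{n+1}) with almost surely distinct non-conformity scores αᵢ = A(Xᵢ,Yᵢ), the conformal prediction set Γ_{1-α}(X_{n+1}) = {y : p(y) > α}, where p(y) = (1/(n+1))·#{i : αᵢ ≥ A(X_{n+1},y)} with α_{n+1} replaced by A(X_{n+1},y), satisfies P(Y_{n+1} ∈ Γ_{1-α}(X_{n+1})) ≥ 1 − α. -/
open MeasureTheory

namespace ConformalAux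

variable {β : Type*}

noncomputable def cnt (n : ℕ) (A : β → ℝ) (j : Fin (n+1)) (d : Fin (n+1) → β) : ℕ :=
  (Finset.univ.filter fun i => A (d j) ≤ A (d i)).card

lemma cnt_one_le (n : ℕ) (A : β → ℝ) (j : Fin (n+1)) (d : Fin (n+1) → β) :
    1 ≤ cnt n A j d :=
  Finset.card_pos.mpr ⟨j, by simp [cnt]⟩

lemma cnt_le (n : ℕ) (A : β → ℝ) (j : Fin (n+1)) (d : Fin (n+1) → β) :
    cnt n A j d ≤ n + 1 :=
  (Finset.card_filter_le _ _).trans_eq (by simp)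

lemma cnt_lt {n : ℕ} {A : β → ℝ} {d : Fin (n+1) → β} {j j' : Fin (n+1)}
    (h : A (d j) < A (d j')) : cnt n A j' d < cnt n A j d := by
  unfold cnt
  refine Finset.card_lt_card ⟨fun i hi => ?_, fun hsub => ?_⟩
  · simp only [Finset.mem_filter, Finset.mem_univ, true_and] at hi ⊢
    exact h.le.trans hi
  · have hj : j ∈ Finset.univ.filter fun i => A (d j) ≤ A (d i) := by simp
    have := hsub hj
    simp only [Finset.mem_filter, Finset.mem_univ, true_and] at this
    exact absurd this (not_le.mpr h)

lemma cnt_injective {n : ℕ} {A : β → ℝ} {d : Fin (n+1) → β}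
    (hd : ∀ i j : Fin (n+1), i ≠ j → A (d i) ≠ A (d j)) :
    Function.Injective fun j => cnt n A j d := by
  intro j j' h
  by_contra hne
  rcases lt_trichotomy (A (d j)) (A (d j')) with hlt | heq | hlt
  · exact absurd h (cnt_lt hlt).ne'
  · exact hd j j' hne heq
  · exact absurd h (cnt_lt hlt).ne

lemma cnt_surj {n : ℕ} {A : β → ℝ} {d : Fin (n+1) → β}
    (hd : ∀ i j : Fin (n+1), i ≠ j → A (d i) ≠ A (d j)) {m : ℕ}
    (hm : m ∈ Finset.Icc 1 (n+1)) : ∃ j, cnt n A j d = m := by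
  have himg : Finset.image (fun j => cnt n A j d) Finset.univ = Finset.Icc 1 (n+1) := by
    apply Finset.eq_of_subset_of_card_le
    · intro m' hm'
      simp only [Finset.mem_image] at hm'
      obtain ⟨j, _, rfl⟩ := hm'
      exact Finset.mem_Icc.mpr ⟨cnt_one_le n A j d, cnt_le n A j d⟩
    · rw [Nat.card_Icc, Finset.card_image_of_injective _ (cnt_injective hd)]
      simp
  rw [← himg] at hm
  simpa using Finset.mem_image.mp hm

lemma measurable_cnt [MeasurableSpace β] {A : β → ℝ} (hA : Measurable A) (n : ℕ)
    (j : Fin (n+1)) : Measurable fun d : Fin (n+1) → β => cnt n A j d := by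
  have h : (fun d : Fin (n+1) → β => cnt n A j d) =
      fun d => ∑ i : Fin (n+1), if A (d j) ≤ A (d i) then 1 else 0 := by
    funext d; rw [cnt, Finset.card_filter]
  rw [h]
  exact Finset.measurable_sum _ fun i _ =>
    Measurable.ite (measurableSet_le (hA.comp (measurable_pi_apply j))
      (hA.comp (measurable_pi_apply i))) measurable_const measurable_const

lemma cnt_comp (n : ℕ) (A : β → ℝ) (σ : Equiv.Perm (Fin (n+1))) (j : Fin (n+1))
    (d : Fin (n+1) → β) : cnt n A j (d ∘ σ) = cnt n A (σ j) d := by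
  unfold cnt
  simp only [Function.comp_apply]
  refine Finset.card_bij (fun i _ => σ i) (fun a ha => ?_)
    (fun a _ b _ h => σ.injective h)
    (fun b hb => ⟨σ.symm b, by simpa using hb, by simp⟩)
  simpa using (by simpa using ha : A (d (σ j)) ≤ A (d (σ a)))

end ConformalAux


open ConformalAux

/-- Finite-sample validity of conformal prediction: under exchangeability of the data pairs
`(Xᵢ, Yᵢ)`, `i = 1,…,n+1`, with almost surely distinct non-conformity scores
`αᵢ = A(Xᵢ, Yᵢ)`, the conformal prediction set `Γ_{1-α}(X_{n+1}) = {y : p(y) > α}` with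
`p(y) = (1/(n+1))·#{i : αᵢ ≥ A(X_{n+1}, y)}` covers the truth:
`P(Y_{n+1} ∈ Γ_{1-α}(X_{n+1})) ≥ 1 − α`.  Membership of `Y_{n+1}` in the set is equivalent to
`p(Y_{n+1}) > α` where the scores include `α_{n+1} = A(X_{n+1}, Y_{n+1})`. -/
theorem conformal_finite_sample_validity {Ω 𝒳 : Type*} [MeasurableSpace Ω]
    [MeasurableSpace 𝒳] (μ : Measure Ω) [IsProbabilityMeasure μ]
    (n : ℕ) (D : Ω → Fin (n + 1) → 𝒳 × ℝ) (hmeasD : Measurable D)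
    (A : 𝒳 × ℝ → ℝ) (hmeasA : Measurable A)
    (hexch : ∀ σ : Equiv.Perm (Fin (n + 1)),
      Measure.map (fun ω => D ω ∘ σ) μ = Measure.map D μ)
    (hdist : ∀ᵐ ω ∂μ, ∀ i j : Fin (n + 1), i ≠ j → A (D ω i) ≠ A (D ω j))
    (α : ℝ) (hα : α ∈ Set.Ioo (0:ℝ) 1) :
    ENNReal.ofReal (1 - α) ≤
      μ {ω | ((Finset.univ.filter fun i : Fin (n + 1) =>
          A (D ω (Fin.last n)) ≤ A (D ω i)).card : ℝ) / (n + 1) > α} := by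
  obtain ⟨hα0, hα1⟩ := hα
  -- notation
  set L : Fin (n+1) := Fin.last n with hL
  have hcntmeas : ∀ j : Fin (n+1), Measurable fun ω => cnt n A j (D ω) :=
    fun j => (measurable_cnt hmeasA n j).comp hmeasD
  have hEmeas : ∀ (j : Fin (n+1)) (m : ℕ),
      MeasurableSet {ω | cnt n A j (D ω) = m} :=
    fun j m => hcntmeas j (measurableSet_singleton m)
  -- exchangeability: each index has the same rank distribution as the last
  have key : ∀ (j : Fin (n+1)) (m : ℕ),
      μ {ω | cnt n A j (D ω) = m} = μ {ω | cnt n A L (D ω) = m} := by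
    intro j m
    have hσmeas : Measurable fun ω => D ω ∘ (Equiv.swap L j) :=
      measurable_pi_lambda _ fun i => (measurable_pi_apply _).comp hmeasD
    have hS : MeasurableSet {d : Fin (n+1) → 𝒳 × ℝ | cnt n A L d = m} :=
      measurable_cnt hmeasA n L (measurableSet_singleton m)
    have h1 := congrArg (fun ν : Measure (Fin (n+1) → 𝒳 × ℝ) =>
      ν {d | cnt n A L d = m}) (hexch (Equiv.swap L j))
    rw [Measure.map_apply hσmeas hS, Measure.map_apply hmeasD hS] at h1
    have hset : (fun ω => D ω ∘ (Equiv.swap L j)) ⁻¹' {d | cnt n A L d = m} =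
        {ω | cnt n A j (D ω) = m} := by
      ext ω
      simp only [Set.mem_preimage, Set.mem_setOf_eq, cnt_comp, Equiv.swap_apply_left]
    rw [hset] at h1
    exact h1
  -- the good event
  set G : Set Ω := {ω | ∀ i j : Fin (n+1), i ≠ j → A (D ω i) ≠ A (D ω j)} with hG
  have hGmeas : MeasurableSet G := by
    have : G = ⋂ (i : Fin (n+1)) (j : Fin (n+1)) (_ : i ≠ j),
        {ω | A (D ω i) ≠ A (D ω j)} := by
      ext ω; simp [hG]
    rw [this]
    refine MeasurableSet.iInter fun i => MeasurableSet.iInter fun j =>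
      MeasurableSet.iInter fun _ => ?_
    exact (measurableSet_eq_fun (hmeasA.comp ((measurable_pi_apply i).comp hmeasD))
      (hmeasA.comp ((measurable_pi_apply j).comp hmeasD))).compl
  have hGc : μ Gᶜ = 0 := by
    have h := ae_iff.mp hdist
    simpa [hG, Set.compl_setOf] using h
  have hGone : μ G = 1 := (prob_compl_eq_zero_iff hGmeas).mp hGc
  -- each rank value m ∈ [1, n+1] has probability with (n+1)·p = 1
  have hrank : ∀ m ∈ Finset.Icc 1 (n+1),
      ((n : ENNReal) + 1) * μ {ω | cnt n A L (D ω) = m} = 1 := by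
    intro m hm
    have hdisj : ((Finset.univ : Finset (Fin (n+1))) : Set (Fin (n+1))).PairwiseDisjoint
        fun j => {ω | cnt n A j (D ω) = m} ∩ G := by
      intro j _ j' _ hjj'
      refine Set.disjoint_left.mpr fun ω hω hω' => ?_
      exact hjj' (cnt_injective hω.2 (hω.1.trans hω'.1.symm))
    have hunion : (⋃ j ∈ (Finset.univ : Finset (Fin (n+1))),
        {ω | cnt n A j (D ω) = m} ∩ G) = G := by
      ext ω
      simp only [Set.mem_iUnion, Finset.mem_univ, Set.mem_inter_iff, Set.mem_setOf_eq,
        exists_prop, true_and]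
      constructor
      · rintro ⟨j, _, hg⟩; exact hg
      · intro hg; obtain ⟨j, hj⟩ := cnt_surj hg hm; exact ⟨j, hj, hg⟩
    have hsum := measure_biUnion_finset (μ := μ) hdisj
      (fun j _ => (hEmeas j m).inter hGmeas)
    rw [hunion, hGone] at hsum
    have hinter : ∀ j : Fin (n+1),
        μ ({ω | cnt n A j (D ω) = m} ∩ G) = μ {ω | cnt n A j (D ω) = m} := by
      intro j
      refine le_antisymm (measure_mono Set.inter_subset_left) ?_
      calc μ {ω | cnt n A j (D ω) = m}
          ≤ μ ({ω | cnt n A j (D ω) = m} ∩ G) + μ Gᶜ := by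
            refine (measure_mono ?_).trans (measure_union_le _ _)
            intro ω hω
            by_cases hg : ω ∈ G
            · exact Or.inl ⟨hω, hg⟩
            · exact Or.inr hg
        _ = μ ({ω | cnt n A j (D ω) = m} ∩ G) := by rw [hGc, add_zero]
    calc ((n : ENNReal) + 1) * μ {ω | cnt n A L (D ω) = m}
        = ∑ j : Fin (n+1), μ {ω | cnt n A L (D ω) = m} := by
          rw [Finset.sum_const, Finset.card_univ, Fintype.card_fin, nsmul_eq_mul]
          push_cast; ring
      _ = ∑ j : Fin (n+1), μ ({ω | cnt n A j (D ω) = m} ∩ G) := by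
          refine Finset.sum_congr rfl fun j _ => ?_
          rw [hinter j, key j m]
      _ = 1 := hsum.symm
  -- the miscoverage event
  set k : ℕ := ⌊α * (n + 1)⌋₊ with hk
  have hkle : (k : ℝ) ≤ α * (n + 1) := Nat.floor_le (by positivity)
  set Bad : Set Ω := {ω | ((Finset.univ.filter fun i : Fin (n + 1) =>
      A (D ω L) ≤ A (D ω i)).card : ℝ) / (n + 1) ≤ α} with hBad
  have hBadeq : ∀ ω, ((Finset.univ.filter fun i : Fin (n + 1) =>
      A (D ω L) ≤ A (D ω i)).card) = cnt n A L (D ω) := fun ω => rfl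
  have hBadsub : Bad ⊆ ⋃ m ∈ Finset.Icc 1 k, {ω | cnt n A L (D ω) = m} := by
    intro ω hω
    simp only [hBad, Set.mem_setOf_eq, hBadeq] at hω
    have hc1 : 1 ≤ cnt n A L (D ω) := cnt_one_le n A L (D ω)
    have hck : cnt n A L (D ω) ≤ k := by
      apply Nat.le_floor
      have hpos : (0:ℝ) < (n:ℝ) + 1 := by positivity
      calc ((cnt n A L (D ω) : ℝ)) = (cnt n A L (D ω) : ℝ) / ((n:ℝ)+1) * ((n:ℝ)+1) := by
            field_simp
        _ ≤ α * ((n:ℝ)+1) := by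
            apply mul_le_mul_of_nonneg_right hω hpos.le
    simp only [Set.mem_iUnion, Finset.mem_Icc, Set.mem_setOf_eq, exists_prop]
    exact ⟨cnt n A L (D ω), ⟨hc1, hck⟩, rfl⟩
  -- bound the miscoverage probability
  have hne : ((n:ENNReal)+1) ≠ 0 := by simp
  have hnt : ((n:ENNReal)+1) ≠ ⊤ := by
    simp [ENNReal.add_ne_top]
  have hkn : k ≤ n + 1 := by
    have h1 : (k:ℝ) < ((n+1:ℕ):ℝ) := by
      push_cast
      refine lt_of_le_of_lt hkle ?_
      nlinarith [Nat.cast_nonneg (α := ℝ) n]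
    exact (Nat.cast_lt.mp h1).le
  have hval : ∀ m ∈ Finset.Icc 1 k,
      μ {ω | cnt n A L (D ω) = m} = ((n:ENNReal)+1)⁻¹ := by
    intro m hm
    have hm' : m ∈ Finset.Icc 1 (n+1) := by
      simp only [Finset.mem_Icc] at hm ⊢
      exact ⟨hm.1, hm.2.trans hkn⟩
    have h := hrank m hm'
    calc μ {ω | cnt n A L (D ω) = m}
        = ((n:ENNReal)+1)⁻¹ * (((n:ENNReal)+1) * μ {ω | cnt n A L (D ω) = m}) := by
          rw [← mul_assoc, ENNReal.inv_mul_cancel hne hnt, one_mul]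
      _ = ((n:ENNReal)+1)⁻¹ := by rw [h, mul_one]
  have hμBad : μ Bad ≤ ENNReal.ofReal α := by
    have hkE : (k:ENNReal) ≤ ENNReal.ofReal α * ((n:ENNReal)+1) := by
      have h1 : (k:ENNReal) = ENNReal.ofReal (k:ℝ) := by
        rw [ENNReal.ofReal_natCast]
      have h2 : ENNReal.ofReal ((n:ℝ)+1) = (n:ENNReal)+1 := by
        rw [ENNReal.ofReal_add (Nat.cast_nonneg n) zero_le_one, ENNReal.ofReal_natCast,
          ENNReal.ofReal_one]
      rw [h1, ← h2, ← ENNReal.ofReal_mul hα0.le]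
      exact ENNReal.ofReal_le_ofReal hkle
    calc μ Bad ≤ ∑ m ∈ Finset.Icc 1 k, μ {ω | cnt n A L (D ω) = m} :=
          (measure_mono hBadsub).trans (measure_biUnion_finset_le _ _)
      _ = (k:ENNReal) * ((n:ENNReal)+1)⁻¹ := by
          rw [Finset.sum_congr rfl hval, Finset.sum_const, Nat.card_Icc, nsmul_eq_mul]
          norm_num
      _ ≤ (ENNReal.ofReal α * ((n:ENNReal)+1)) * ((n:ENNReal)+1)⁻¹ :=
          mul_le_mul_left hkE _
      _ = ENNReal.ofReal α := by
          rw [mul_assoc, ENNReal.mul_inv_cancel hne hnt, mul_one]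
  have hf : Measurable fun ω => (cnt n A L (D ω) : ℝ) :=
    Measurable.comp (measurable_from_top : Measurable (Nat.cast : ℕ → ℝ)) (hcntmeas L)
  have hBadmeas : MeasurableSet Bad :=
    measurableSet_le (hf.div_const _) measurable_const
  have hcompl : {ω | ((Finset.univ.filter fun i : Fin (n + 1) =>
      A (D ω (Fin.last n)) ≤ A (D ω i)).card : ℝ) / (n + 1) > α} = Badᶜ := by
    ext ω
    simp only [hBad, Set.mem_compl_iff, Set.mem_setOf_eq, not_le, gt_iff_lt, hL]
  rw [hcompl, prob_compl_eq_one_sub hBadmeas]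
  calc ENNReal.ofReal (1 - α) = 1 - ENNReal.ofReal α := by
        rw [ENNReal.ofReal_sub _ hα0.le, ENNReal.ofReal_one]
    _ ≤ 1 - μ Bad := tsub_le_tsub_left hμBad 1
end

section
/- Suppose the threshold process satisfies C_{t+1} = C_t + γ_t(f(C_t) + Δ_t) where f : ℝ → ℝ is continuous with a unique root C*, (C − C*)·f(C) < 0 for all C ≠ C*, |f| ≤ 1, (Δ_t) is a bounded martingale difference sequence, and Σγ_t = ∞, Σγ_t² < ∞ with γ_t > 0. Then C_t → C* almost surely. -/
open MeasureTheory Filter Finset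

private lemma integrable_of_ae_bdd {Ω : Type*} {m : MeasurableSpace Ω} {μ : Measure Ω}
    [IsFiniteMeasure μ] {g : Ω → ℝ} (hg : AEStronglyMeasurable g μ) {b : ℝ}
    (h : ∀ᵐ ω ∂μ, |g ω| ≤ b) : Integrable g μ :=
  (integrable_const b).mono' hg (by filter_upwards [h] with ω h; simpa [Real.norm_eq_abs] using h)

private lemma telescope_rm {x γ ε : ℕ → ℝ} {f : ℝ → ℝ}
    (hupd : ∀ n, x (n+1) = x n + γ n * f (x n) + ε n) :
    ∀ m n, m ≤ n → x n = x m + ∑ k ∈ Finset.Ico m n, (γ k * f (x k) + ε k) := by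
  intro m n hmn
  induction n, hmn using Nat.le_induction with
  | base => simp
  | succ n hmn ih =>
    rw [Finset.sum_Ico_succ_top (by omega), hupd n, ih]; ring

private lemma upper_rm {f : ℝ → ℝ} (hf : Continuous f) {Cstar : ℝ}
    (hneg : ∀ u, Cstar < u → f u < 0) (hfbdd : ∀ u, |f u| ≤ 1)
    {γ : ℕ → ℝ} (hγpos : ∀ t, 0 < γ t)
    (hγdiv : Tendsto (fun n => ∑ k ∈ Finset.range n, γ k) atTop atTop)
    (hγ0 : Tendsto γ atTop (nhds 0))
    {x ε : ℕ → ℝ} (hupd : ∀ n, x (n+1) = x n + γ n * f (x n) + ε n)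
    (hS : CauchySeq (fun n => ∑ k ∈ Finset.range n, ε k))
    {b : ℝ} (hb : Cstar < b) : ∀ᶠ n in atTop, x n < b := by
  set S : ℕ → ℝ := fun n => ∑ k ∈ Finset.range n, ε k with hSdef
  set a : ℝ := (Cstar + b) / 2 with hadef
  have ha : Cstar < a := by rw [hadef]; linarith
  have hab : a < b := by rw [hadef]; linarith
  set η : ℝ := (b - a) / 3 with hηdef
  have hη : 0 < η := by rw [hηdef]; linarith
  -- Cauchy bound
  obtain ⟨N₁, hN₁⟩ := Metric.cauchySeq_iff.mp hS η hη
  obtain ⟨N₂, hN₂⟩ := (Metric.tendsto_atTop.mp hγ0 η hη)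
  set N := max N₁ N₂ with hNdef
  have hScl : ∀ p q, N ≤ p → N ≤ q → |S q - S p| < η := by
    intro p q hp hq
    have := hN₁ q (le_trans (le_max_left _ _) hq) p (le_trans (le_max_left _ _) hp)
    simpa [Real.dist_eq] using this
  have hγsm : ∀ p, N ≤ p → γ p < η := by
    intro p hp
    have := hN₂ p (le_trans (le_max_right _ _) hp)
    rw [Real.dist_eq, sub_zero, abs_of_pos (hγpos p)] at this; exact this
  have key := telescope_rm hupd
  have hsum_eps : ∀ p q, p ≤ q → ∑ k ∈ Finset.Ico p q, ε k = S q - S p := by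
    intro p q hpq; rw [hSdef]; exact Finset.sum_Ico_eq_sub _ hpq
  -- Step 1: there is n₀ ≥ N with x n₀ ≤ a
  have step1 : ∃ n₀, N ≤ n₀ ∧ x n₀ ≤ a := by
    by_contra h
    push_neg at h
    have hgt : ∀ n, N ≤ n → a < x n := fun n hn => h n hn
    set B := x N + η with hBdef
    have hB : ∀ n, N ≤ n → x n ≤ B := by
      intro n hn
      have hx := key N n hn
      have h1 : ∑ k ∈ Finset.Ico N n, (γ k * f (x k) + ε k)
          ≤ ∑ k ∈ Finset.Ico N n, ε k := by
        apply Finset.sum_le_sum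
        intro k hk
        have hk' : N ≤ k := (Finset.mem_Ico.mp hk).1
        have : f (x k) < 0 := hneg _ (lt_trans ha (hgt k hk'))
        nlinarith [hγpos k]
      have h2 : ∑ k ∈ Finset.Ico N n, ε k < η := by
        rw [hsum_eps N n hn]
        exact lt_of_le_of_lt (le_abs_self _) (hScl N n le_rfl hn)
      rw [hx, hBdef]; linarith
    have haB : a ≤ B := le_of_lt (lt_of_lt_of_le (hgt N le_rfl) (hB N le_rfl))
    obtain ⟨u, hu, hmax⟩ := (isCompact_Icc (a := a) (b := B)).exists_isMaxOn
      (Set.nonempty_Icc.mpr haB) hf.continuousOn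
    set c := -f u with hcdef
    have hc : 0 < c := by
      have := hneg u (lt_of_lt_of_le ha hu.1)
      rw [hcdef]; linarith
    -- choose n large
    obtain ⟨n, hn1, hn2⟩ := (((hγdiv.eventually
      (eventually_gt_atTop ((∑ k ∈ Finset.range N, γ k) + (B - a + η) / c))).and
      (eventually_ge_atTop N)).exists)
    have hIco : ∑ k ∈ Finset.Ico N n, γ k
        = ∑ k ∈ Finset.range n, γ k - ∑ k ∈ Finset.range N, γ k :=
      Finset.sum_Ico_eq_sub _ hn2
    have hbig : (B - a + η) / c < ∑ k ∈ Finset.Ico N n, γ k := by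
      rw [hIco]; linarith
    have hx := key N n hn2
    have h1 : ∑ k ∈ Finset.Ico N n, (γ k * f (x k) + ε k)
        ≤ ∑ k ∈ Finset.Ico N n, (γ k * (-c) + ε k) := by
      apply Finset.sum_le_sum
      intro k hk
      have hk' : N ≤ k := (Finset.mem_Ico.mp hk).1
      have hmem : x k ∈ Set.Icc a B := ⟨le_of_lt (hgt k hk'), hB k hk'⟩
      have hfle : f (x k) ≤ -c := by
        have := hmax hmem; rw [hcdef]; simpa using this
      have := hγpos k
      nlinarith
    have h2 : ∑ k ∈ Finset.Ico N n, (γ k * (-c) + ε k)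
        = -c * ∑ k ∈ Finset.Ico N n, γ k + (S n - S N) := by
      rw [Finset.sum_add_distrib, ← Finset.sum_mul, hsum_eps N n hn2]; ring
    have h3 : S n - S N < η := lt_of_le_of_lt (le_abs_self _) (hScl N n le_rfl hn2)
    have hxa : a < x n := hgt n hn2
    have hcon : x n ≤ x N + (-c * ∑ k ∈ Finset.Ico N n, γ k + (S n - S N)) := by
      rw [hx]; linarith
    have hxN : x N ≤ B := hB N le_rfl
    have : c * ∑ k ∈ Finset.Ico N n, γ k > B - a + η := by
      calc B - a + η = c * ((B - a + η) / c) := by field_simp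
      _ < c * ∑ k ∈ Finset.Ico N n, γ k := by
          exact (mul_lt_mul_iff_right₀ hc).mpr hbig
    linarith
  obtain ⟨n₀, hn₀N, hxn₀⟩ := step1
  -- Step 2: invariant
  have inv : ∀ n, n₀ ≤ n → ∃ mm, n₀ ≤ mm ∧ mm ≤ n ∧ x mm ≤ a ∧
      ∀ k, mm < k → k ≤ n → a < x k := by
    intro n hn
    induction n, hn using Nat.le_induction with
    | base => exact ⟨n₀, le_rfl, le_rfl, hxn₀, fun k h1 h2 => by omega⟩
    | succ n hn ih =>
      rcases le_or_gt (x (n+1)) a with hle | hgt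
      · exact ⟨n+1, by omega, le_rfl, hle, fun k h1 h2 => by omega⟩
      · obtain ⟨mm, h1, h2, h3, h4⟩ := ih
        refine ⟨mm, h1, by omega, h3, fun k hk1 hk2 => ?_⟩
        rcases eq_or_lt_of_le hk2 with heq | hlt
        · rwa [heq]
        · exact h4 k hk1 (by omega)
  rw [eventually_atTop]
  refine ⟨n₀, fun n hn => ?_⟩
  obtain ⟨mm, hm1, hm2, hm3, hm4⟩ := inv n hn
  rcases eq_or_lt_of_le hm2 with heq | hlt
  · rw [← heq]; exact lt_of_le_of_lt hm3 hab
  · have hmN : N ≤ mm := le_trans hn₀N hm1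
    have hx := key mm n (le_of_lt hlt)
    rw [Finset.sum_eq_sum_Ico_succ_bot hlt] at hx
    have h1 : ∑ k ∈ Finset.Ico (mm+1) n, (γ k * f (x k) + ε k)
        ≤ ∑ k ∈ Finset.Ico (mm+1) n, ε k := by
      apply Finset.sum_le_sum
      intro k hk
      have hk1 := (Finset.mem_Ico.mp hk).1
      have hk2 := (Finset.mem_Ico.mp hk).2
      have : a < x k := hm4 k (by omega) (by omega)
      have : f (x k) < 0 := hneg _ (lt_trans ha this)
      nlinarith [hγpos k]
    have h2 : ∑ k ∈ Finset.Ico (mm+1) n, ε k = S n - S (mm+1) :=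
      hsum_eps _ _ (by omega)
    have h3 : S (mm+1) = S mm + ε mm := by
      rw [hSdef]; exact Finset.sum_range_succ _ _
    have h4 : S n - S mm < η := lt_of_le_of_lt (le_abs_self _) (hScl mm n hmN (by omega))
    have h5 : γ mm * f (x mm) ≤ γ mm := by
      have := hfbdd (x mm)
      have := hγpos mm
      nlinarith [abs_le.mp (hfbdd (x mm))]
    have h6 : γ mm < η := hγsm mm hmN
    have : x n ≤ x mm + γ mm + (S n - S mm) := by rw [hx]; linarith
    have hη3 : a + 2 * η < b := by rw [hηdef]; linarith
    linarith

private lemma det_rm {f : ℝ → ℝ} (hf : Continuous f) {Cstar : ℝ}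
    (hneg : ∀ u, Cstar < u → f u < 0) (hpos : ∀ u, u < Cstar → 0 < f u)
    (hfbdd : ∀ u, |f u| ≤ 1)
    {γ : ℕ → ℝ} (hγpos : ∀ t, 0 < γ t)
    (hγdiv : Tendsto (fun n => ∑ k ∈ Finset.range n, γ k) atTop atTop)
    (hγ0 : Tendsto γ atTop (nhds 0))
    {x ε : ℕ → ℝ} (hupd : ∀ n, x (n+1) = x n + γ n * f (x n) + ε n)
    (hS : CauchySeq (fun n => ∑ k ∈ Finset.range n, ε k)) :
    Tendsto x atTop (nhds Cstar) := by
  rw [Metric.tendsto_atTop]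
  intro δ hδ
  have hup : ∀ᶠ n in atTop, x n < Cstar + δ :=
    upper_rm hf hneg hfbdd hγpos hγdiv hγ0 hupd hS (by linarith)
  -- reflected process
  set g : ℝ → ℝ := fun y => -f (2 * Cstar - y) with hgdef
  have hgc : Continuous g := (hf.comp (by continuity)).neg
  have hgneg : ∀ u, Cstar < u → g u < 0 := by
    intro u hu
    have : 2 * Cstar - u < Cstar := by linarith
    have := hpos _ this
    simp only [hgdef]; linarith
  have hgbdd : ∀ u, |g u| ≤ 1 := by
    intro u; simp only [hgdef, abs_neg]; exact hfbdd _
  have hupd' : ∀ n, (2 * Cstar - x (n+1)) = (2 * Cstar - x n) + γ n * g (2 * Cstar - x n) + (- ε n) := by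
    intro n
    have hxx := hupd n
    simp only [hgdef]
    have : 2 * Cstar - (2 * Cstar - x n) = x n := by ring
    rw [this, hxx]; ring
  have hS' : CauchySeq (fun n => ∑ k ∈ Finset.range n, (- ε k)) := by
    have : (fun n => ∑ k ∈ Finset.range n, (- ε k))
        = fun n => -(∑ k ∈ Finset.range n, ε k) := by
      funext n; rw [Finset.sum_neg_distrib]
    rw [this]; exact hS.neg
  have hlow : ∀ᶠ n in atTop, (2 * Cstar - x n) < Cstar + δ :=
    upper_rm (x := fun n => 2 * Cstar - x n) hgc hgneg hgbdd hγpos hγdiv hγ0 hupd' hS'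
      (by linarith)
  rw [eventually_atTop] at hup hlow
  obtain ⟨N1, h1⟩ := hup
  obtain ⟨N2, h2⟩ := hlow
  refine ⟨max N1 N2, fun n hn => ?_⟩
  have := h1 n (le_trans (le_max_left _ _) hn)
  have := h2 n (le_trans (le_max_right _ _) hn)
  rw [Real.dist_eq, abs_lt]
  constructor <;> linarith

/-- Robbins–Monro convergence: if `C_{t+1} = C_t + γ_t (f(C_t) + Δ_{t+1})` where `f` is
continuous with unique root `C*`, satisfies `(C − C*)·f(C) < 0` for `C ≠ C*` and `|f| ≤ 1`,
`(Δ_t)` is a bounded martingale difference sequence, and `Σ γ_t = ∞`, `Σ γ_t² < ∞` with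
`γ_t > 0`, then `C_t → C*` almost surely. -/
theorem robbins_monro_convergence {Ω : Type*} {m : MeasurableSpace Ω}
    (μ : Measure Ω) [IsProbabilityMeasure μ] (ℱ : Filtration ℕ m)
    (f : ℝ → ℝ) (hf : Continuous f) (Cstar : ℝ) (hroot : f Cstar = 0)
    (huniq : ∀ C : ℝ, C ≠ Cstar → f C ≠ 0)
    (hsign : ∀ C : ℝ, C ≠ Cstar → (C - Cstar) * f C < 0)
    (hfbdd : ∀ C : ℝ, |f C| ≤ 1)
    (γ : ℕ → ℝ) (hγpos : ∀ t, 0 < γ t) (hγdiv : ¬ Summable γ)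
    (hγsq : Summable fun t => (γ t) ^ 2)
    (Δ : ℕ → Ω → ℝ) (hadapt : Adapted ℱ Δ)
    (hmds : ∀ t, μ[Δ (t + 1) | ℱ t] =ᵐ[μ] 0)
    (K : ℝ) (hbdd : ∀ t, ∀ᵐ ω ∂μ, |Δ t ω| ≤ K)
    (C : ℕ → Ω → ℝ) (hadaptC : Adapted ℱ C)
    (hupd : ∀ t ω, C (t + 1) ω = C t ω + γ t * (f (C t ω) + Δ (t + 1) ω)) :
    ∀ᵐ ω ∂μ, Tendsto (fun t => C t ω) atTop (nhds Cstar) := by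
  classical
  set T : ℝ := ∑' t, (γ t) ^ 2 with hTdef
  set M : ℕ → Ω → ℝ := fun n ω => ∑ k ∈ Finset.range n, γ k * Δ (k+1) ω with hMdef
  have hae : ∀ᵐ ω ∂μ, ∀ t, |Δ t ω| ≤ K := ae_all_iff.mpr hbdd
  have hΔmeas : ∀ t, AEStronglyMeasurable (Δ t) μ :=
    fun t => ((hadapt t).mono (ℱ.le t) le_rfl).aestronglyMeasurable
  have intΔ : ∀ t, Integrable (Δ t) μ := fun t => integrable_of_ae_bdd (hΔmeas t) (hbdd t)
  have hMmeas : ∀ n, StronglyMeasurable[ℱ n] (M n) := by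
    intro n
    apply Finset.stronglyMeasurable_fun_sum
    intro k hk
    have hk' : k + 1 ≤ n := Finset.mem_range.mp hk
    exact (((hadapt (k+1)).mono (ℱ.mono hk') le_rfl).const_mul (γ k)).stronglyMeasurable
  have hMbd : ∀ n, ∀ᵐ ω ∂μ, |M n ω| ≤ (∑ k ∈ Finset.range n, γ k) * |K| := by
    intro n
    filter_upwards [hae] with ω hω
    calc |M n ω| ≤ ∑ k ∈ Finset.range n, |γ k * Δ (k+1) ω| := Finset.abs_sum_le_sum_abs _ _
    _ ≤ ∑ k ∈ Finset.range n, γ k * |K| := by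
        apply Finset.sum_le_sum
        intro k _
        rw [abs_mul, abs_of_pos (hγpos k)]
        exact mul_le_mul_of_nonneg_left ((hω (k+1)).trans (le_abs_self K)) (hγpos k).le
    _ = (∑ k ∈ Finset.range n, γ k) * |K| := by rw [Finset.sum_mul]
  have intM : ∀ n, Integrable (M n) μ := fun n =>
    integrable_of_ae_bdd ((hMmeas n).mono (ℱ.le n)).aestronglyMeasurable (hMbd n)
  have hMadd : ∀ n, M (n+1) = M n + γ n • Δ (n+1) := by
    intro n; funext ω
    simp [hMdef, Finset.sum_range_succ, smul_eq_mul]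
  have hmart : Martingale M ℱ μ := by
    apply martingale_nat (fun n => hMmeas n) intM
    intro n
    have h1 : μ[M (n+1)|ℱ n] =ᵐ[μ] μ[M n|ℱ n] + μ[γ n • Δ (n+1)|ℱ n] := by
      rw [hMadd n]
      exact condExp_add (intM n) ((intΔ (n+1)).smul (γ n)) _
    have h2 : μ[M n|ℱ n] = M n := condExp_of_stronglyMeasurable (ℱ.le n) (hMmeas n) (intM n)
    have h3 : μ[γ n • Δ (n+1)|ℱ n] =ᵐ[μ] γ n • μ[Δ (n+1)|ℱ n] := condExp_smul _ _ _
    have h4 : γ n • μ[Δ (n+1)|ℱ n] =ᵐ[μ] (0 : Ω → ℝ) := by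
      filter_upwards [hmds n] with ω hω
      simp [hω]
    refine EventuallyEq.symm (h1.trans ?_)
    rw [h2]
    calc M n + μ[γ n • Δ (n+1)|ℱ n] =ᵐ[μ] M n + γ n • μ[Δ (n+1)|ℱ n] := by
          filter_upwards [h3] with ω hω; simp [hω]
    _ =ᵐ[μ] M n := by filter_upwards [h4] with ω hω; simp [hω]
  -- second moments
  have intM2 : ∀ n, Integrable (fun ω => (M n ω)^2) μ := by
    intro n
    refine integrable_of_ae_bdd ?_ (b := ((∑ k ∈ Finset.range n, γ k) * |K|)^2) ?_
    · exact (((hMmeas n).mono (ℱ.le n)).mul ((hMmeas n).mono (ℱ.le n))).aestronglyMeasurable.congr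
        (by filter_upwards with ω; simp only [Pi.mul_apply]; ring)
    · filter_upwards [hMbd n] with ω hω
      rw [abs_of_nonneg (sq_nonneg _)]
      calc (M n ω)^2 = |M n ω|^2 := (sq_abs _).symm
      _ ≤ ((∑ k ∈ Finset.range n, γ k) * |K|)^2 := by
          apply pow_le_pow_left₀ (abs_nonneg _) hω
  have intΔ2 : ∀ t, Integrable (fun ω => (Δ t ω)^2) μ := by
    intro t
    refine integrable_of_ae_bdd ?_ (b := K^2) ?_
    · exact ((hΔmeas t).mul (hΔmeas t)).congr (by filter_upwards with ω; simp only [Pi.mul_apply]; ring)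
    · filter_upwards [hbdd t] with ω hω
      rw [abs_of_nonneg (sq_nonneg _)]
      calc (Δ t ω)^2 = |Δ t ω|^2 := (sq_abs _).symm
      _ ≤ K^2 := by nlinarith [abs_nonneg (Δ t ω)]
  have intMΔ : ∀ n, Integrable (M n * Δ (n+1)) μ := by
    intro n
    refine integrable_of_ae_bdd (((hMmeas n).mono (ℱ.le n)).aestronglyMeasurable.mul
      (hΔmeas (n+1))) (b := ((∑ k ∈ Finset.range n, γ k) * |K|) * |K|) ?_
    filter_upwards [hMbd n, hae] with ω h1 h2
    rw [Pi.mul_apply, abs_mul]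
    have := h2 (n+1)
    have h3 : |Δ (n+1) ω| ≤ |K| := this.trans (le_abs_self _)
    exact mul_le_mul h1 h3 (abs_nonneg _) (mul_nonneg (Finset.sum_nonneg fun k _ => (hγpos k).le) (abs_nonneg K))
  have cross : ∀ n, ∫ ω, M n ω * Δ (n+1) ω ∂μ = 0 := by
    intro n
    have h1 : μ[M n * Δ (n+1)|ℱ n] =ᵐ[μ] M n * μ[Δ (n+1)|ℱ n] :=
      condExp_mul_of_stronglyMeasurable_left (hMmeas n) (intMΔ n) (intΔ (n+1))
    have h2 : M n * μ[Δ (n+1)|ℱ n] =ᵐ[μ] (0 : Ω → ℝ) := by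
      filter_upwards [hmds n] with ω hω
      simp [Pi.mul_apply, hω]
    have h3 : ∫ ω, (M n * Δ (n+1)) ω ∂μ = ∫ ω, (μ[M n * Δ (n+1)|ℱ n]) ω ∂μ :=
      (integral_condExp (ℱ.le n)).symm
    have h4 : ∫ ω, (μ[M n * Δ (n+1)|ℱ n]) ω ∂μ = 0 := by
      rw [integral_congr_ae (h1.trans h2)]; simp
    simpa [Pi.mul_apply] using h3.trans h4
  have hΔ2le : ∀ t, ∫ ω, (Δ t ω)^2 ∂μ ≤ K^2 := by
    intro t
    have : ∫ ω, (Δ t ω)^2 ∂μ ≤ ∫ _ω, K^2 ∂μ := by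
      apply integral_mono_ae (intΔ2 t) (integrable_const _)
      filter_upwards [hbdd t] with ω hω
      nlinarith [abs_nonneg (Δ t ω), (abs_le.mp hω).1, (abs_le.mp hω).2]
    simpa using this
  have hV : ∀ n, ∫ ω, (M n ω)^2 ∂μ ≤ K^2 * ∑ k ∈ Finset.range n, (γ k)^2 := by
    intro n
    induction n with
    | zero => simp [hMdef]
    | succ n ih =>
      have hexp : (fun ω => (M (n+1) ω)^2)
          = fun ω => (M n ω)^2 + (2 * γ n) * (M n ω * Δ (n+1) ω) + (γ n)^2 * (Δ (n+1) ω)^2 := by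
        funext ω
        rw [hMadd n]
        simp only [Pi.add_apply, Pi.smul_apply, smul_eq_mul]
        ring
      have hint1 : Integrable (fun ω => (M n ω)^2 + (2 * γ n) * (M n ω * Δ (n+1) ω)) μ :=
        (intM2 n).add (((intMΔ n).const_mul (2 * γ n)).congr (by filter_upwards with ω; simp))
      have : ∫ ω, (M (n+1) ω)^2 ∂μ
          = ∫ ω, (M n ω)^2 ∂μ + (2 * γ n) * ∫ ω, M n ω * Δ (n+1) ω ∂μ
            + (γ n)^2 * ∫ ω, (Δ (n+1) ω)^2 ∂μ := by
        rw [hexp]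
        rw [integral_add hint1 (((intΔ2 (n+1)).const_mul ((γ n)^2)).congr
          (by filter_upwards with ω; simp))]
        rw [integral_add (intM2 n) (((intMΔ n).const_mul (2 * γ n)).congr
          (by filter_upwards with ω; simp))]
        rw [integral_const_mul, integral_const_mul]
      rw [this, cross n, Finset.sum_range_succ]
      have := hΔ2le (n+1)
      nlinarith [sq_nonneg (γ n)]
  have hVT : ∀ n, ∫ ω, (M n ω)^2 ∂μ ≤ K^2 * T := by
    intro n
    refine (hV n).trans (mul_le_mul_of_nonneg_left ?_ (sq_nonneg K))
    exact Summable.sum_le_tsum _ (fun k _ => sq_nonneg _) hγsq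
  -- L1 bound
  have hL1 : ∀ n, eLpNorm (M n) 1 μ ≤ ENNReal.ofReal ((1 + K^2 * T)/2) := by
    intro n
    have hint : ∫ ω, ‖M n ω‖ ∂μ ≤ (1 + K^2 * T)/2 := by
      have h1 : ∫ ω, ‖M n ω‖ ∂μ ≤ ∫ ω, (1 + (M n ω)^2)/2 ∂μ := by
        apply integral_mono (intM n).norm ((((integrable_const (1:ℝ)).add (intM2 n)).div_const 2))
        intro ω
        simp only [Real.norm_eq_abs, Pi.add_apply]
        nlinarith [sq_abs (M n ω), sq_nonneg (|M n ω| - 1)]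
      have h2 : ∫ ω, (1 + (M n ω)^2)/2 ∂μ = (1 + ∫ ω, (M n ω)^2 ∂μ)/2 := by
        rw [integral_div, integral_add (integrable_const 1) (intM2 n)]
        simp
      have := hVT n
      rw [h2] at h1
      linarith
    calc eLpNorm (M n) 1 μ = ENNReal.ofReal (∫ ω, ‖M n ω‖ ∂μ) := by
          rw [eLpNorm_one_eq_lintegral_enorm,
            ← ofReal_integral_norm_eq_lintegral_enorm (intM n)]
    _ ≤ ENNReal.ofReal ((1 + K^2 * T)/2) := ENNReal.ofReal_le_ofReal hint
  have hT : (0:ℝ) ≤ T := tsum_nonneg fun t => sq_nonneg _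
  have hDoob := hmart.submartingale.ae_tendsto_limitProcess
    (R := ⟨(1 + K^2 * T)/2, by positivity⟩)
    (fun n => (hL1 n).trans_eq (ENNReal.ofReal_eq_coe_nnreal _))

  -- deterministic hypotheses
  have hneg : ∀ u, Cstar < u → f u < 0 := by
    intro u hu
    have h := hsign u (ne_of_gt hu)
    nlinarith [sub_pos.mpr hu]
  have hpos : ∀ u, u < Cstar → 0 < f u := by
    intro u hu
    have h := hsign u (ne_of_lt hu)
    nlinarith [sub_neg.mpr hu]
  have hγdivT : Tendsto (fun n => ∑ k ∈ Finset.range n, γ k) atTop atTop :=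
    (not_summable_iff_tendsto_nat_atTop_of_nonneg (fun n => (hγpos n).le)).mp hγdiv
  have hγ0 : Tendsto γ atTop (nhds 0) := by
    have h2 := hγsq.tendsto_atTop_zero
    have hγeq : γ = fun t => Real.sqrt (γ t ^ 2) :=
      funext fun t => (Real.sqrt_sq (hγpos t).le).symm
    rw [hγeq]
    have := (Real.continuous_sqrt.tendsto 0).comp h2
    simpa [Function.comp_def] using this
  filter_upwards [hDoob] with ω hω
  have hSc : CauchySeq (fun n => ∑ k ∈ Finset.range n, γ k * Δ (k+1) ω) := hω.cauchySeq
  exact det_rm hf hneg hpos hfbdd hγpos hγdivT hγ0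
    (x := fun t => C t ω) (ε := fun t => γ t * Δ (t+1) ω)
    (fun n => by show C (n+1) ω = _; rw [hupd n ω]; ring) hSc
end
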